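/- If F and I are as follows—F ∈ H^2, I inner, and the product IF has bounded Garsia norm (IF ∈ BMOA)—then F ∈ BMOA and ∥F∥_G ≤ ∥IF∥_G (the division property of BMOA). -/

import Mathlib

open MeasureTheory Complex Real Filter Topology
open scoped ENNReal

/-- Normalized arc-length measure on the circle, parametrized by angle θ ∈ (0, 2π]. -/
noncomputable def circleM : Measure ℝ :=
  (ENNReal.ofReal (2 * Real.pi))⁻¹ • (volume.restrict (Set.Ioc 0 (2 * Real.pi)))

/-- Poisson kernel (density of harmonic measure ω_z w.r.t. circleM) at the boundary
point with angle θ. -/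
noncomputable def pk (z : ℂ) (θ : ℝ) : ℝ :=
  (1 - ‖z‖ ^ 2) / ‖Complex.exp (θ * Complex.I) - z‖ ^ 2

/-- Poisson integral of a complex boundary function. -/
noncomputable def poissonInt (f : ℝ → ℂ) (z : ℂ) : ℂ :=
  ∫ θ, (pk z θ : ℂ) * f θ ∂circleM

/-- Poisson integral of a real boundary function. -/
noncomputable def poissonIntR (u : ℝ → ℝ) (z : ℂ) : ℝ :=
  ∫ θ, pk z θ * u θ ∂circleM

/-- Φ_f(z) = P(|f|²)(z) - |Pf(z)|². -/
noncomputable def Phi (f : ℝ → ℂ) (z : ℂ) : ℝ :=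
  (∫ θ, pk z θ * ‖f θ‖ ^ 2 ∂circleM) - ‖poissonInt f z‖ ^ 2

/-- The open unit disk. -/
def unitDisk : Set ℂ := Metric.ball 0 1

/-- The Garsia norm ‖f‖_G = sup_{z ∈ 𝔻} Φ_f(z)^{1/2}, valued in ℝ≥0∞. -/
noncomputable def garsiaNorm (f : ℝ → ℂ) : ℝ≥0∞ :=
  ⨆ z : unitDisk, ENNReal.ofReal (Real.sqrt (Phi f (z : ℂ)))

lemma exp_sub_ne (z : ℂ) (hz : ‖z‖ < 1) (θ : ℝ) :
    Complex.exp (θ * Complex.I) - z ≠ 0 := by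
  intro h
  rw [sub_eq_zero] at h
  rw [← h] at hz
  simp [Complex.norm_exp_ofReal_mul_I] at hz

lemma pk_eq_re (z : ℂ) (hz : ‖z‖ < 1) (θ : ℝ) :
    pk z θ = ((Complex.exp (θ * Complex.I) + z) / (Complex.exp (θ * Complex.I) - z)).re := by
  set w := Complex.exp (θ * Complex.I) with hw
  have hw1 : ‖w‖ = 1 := Complex.norm_exp_ofReal_mul_I θ
  have hwsq : w.re ^ 2 + w.im ^ 2 = 1 := by
    have := Complex.sq_norm w
    rw [hw1] at this
    simp [Complex.normSq_apply] at this
    nlinarith [this]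
  have hne : w - z ≠ 0 := exp_sub_ne z hz θ
  have hns : Complex.normSq (w - z) ≠ 0 := by simpa using hne
  rw [pk, Complex.div_re]
  rw [← hw]
  have habs : ‖w - z‖ ^ 2 = Complex.normSq (w - z) := Complex.sq_norm _
  have habsz : ‖z‖ ^ 2 = Complex.normSq z := Complex.sq_norm z
  rw [habs, habsz]
  field_simp
  simp only [Complex.normSq_apply, Complex.add_re, Complex.add_im, Complex.sub_re, Complex.sub_im]
  ring_nf
  nlinarith [hwsq]

lemma exp_neg_mul_I_abs (θ : ℝ) : ‖Complex.exp (-(θ:ℂ) * Complex.I)‖ = 1 := by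
  have : (-(θ:ℂ) * Complex.I) = ((-θ : ℝ) : ℂ) * Complex.I := by push_cast; ring
  rw [this, Complex.norm_exp_ofReal_mul_I]

lemma hasDerivAt_F (z : ℂ) (hz : ‖z‖ < 1) (θ : ℝ) :
    HasDerivAt (fun t : ℝ => (t : ℂ) + (2 / Complex.I) * Complex.log (1 - z * Complex.exp (-(t:ℂ) * Complex.I)))
      ((Complex.exp (θ * Complex.I) + z) / (Complex.exp (θ * Complex.I) - z)) θ := by
  set w := Complex.exp ((θ:ℂ) * Complex.I) with hwdef
  have hw1 : ‖w‖ = 1 := Complex.norm_exp_ofReal_mul_I θ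
  have hw0 : w ≠ 0 := by intro h; rw [h] at hw1; simp at hw1
  have hwz : w - z ≠ 0 := exp_sub_ne z hz θ
  have hprod : Complex.exp (-(θ:ℂ) * Complex.I) * w = 1 := by
    rw [hwdef, ← Complex.exp_add]; ring_nf; exact Complex.exp_zero
  -- derivative of inner exp
  have h1 : HasDerivAt (fun t : ℝ => Complex.exp (-(t:ℂ) * Complex.I))
      (-Complex.I * Complex.exp (-(θ:ℂ) * Complex.I)) θ := by
    have : HasDerivAt (fun c : ℂ => Complex.exp (-c * Complex.I))
        (-Complex.I * Complex.exp (-(θ:ℂ) * Complex.I)) ((θ:ℝ) : ℂ) := by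
      have := ((Complex.hasDerivAt_exp (-(θ:ℂ) * Complex.I)).comp ((θ:ℂ))
        (((hasDerivAt_id ((θ:ℂ))).neg).mul_const Complex.I))
      simpa [mul_comm, Function.comp_def] using this
    exact this.comp_ofReal
  have hg : HasDerivAt (fun t : ℝ => 1 - z * Complex.exp (-(t:ℂ) * Complex.I))
      (z * Complex.I * Complex.exp (-(θ:ℂ) * Complex.I)) θ := by
    have := (h1.const_mul z).const_sub 1
    exact this.congr_deriv (by ring)
  have hslit : (1 - z * Complex.exp (-(θ:ℂ) * Complex.I)) ∈ Complex.slitPlane := by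
    apply Or.inl
    have hre : (z * Complex.exp (-(θ:ℂ) * Complex.I)).re ≤ ‖z * Complex.exp (-(θ:ℂ) * Complex.I)‖ :=
      Complex.re_le_norm _
    rw [norm_mul, exp_neg_mul_I_abs, mul_one] at hre
    simp only [Complex.sub_re, Complex.one_re]
    linarith
  have hlog := (Complex.hasDerivAt_log hslit).comp θ hg
  have hsum := ((hasDerivAt_id θ).ofReal_comp).add (hlog.const_mul (2 / Complex.I))
  refine hsum.congr_deriv (Eq.symm ?_)
  have hne : (1 - z * Complex.exp (-(θ:ℂ) * Complex.I)) ≠ 0 := Complex.slitPlane_ne_zero hslit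
  have he : Complex.exp (-(θ:ℂ) * Complex.I) = w⁻¹ := eq_inv_of_mul_eq_one_left hprod
  rw [he] at hne ⊢
  rw [hwdef] at *
  field_simp at hne ⊢
  ring_nf
  push_cast
  ring

lemma continuous_integrand (z : ℂ) (hz : ‖z‖ < 1) :
    Continuous (fun θ : ℝ => (Complex.exp (θ * Complex.I) + z) / (Complex.exp (θ * Complex.I) - z)) := by
  have hc : Continuous (fun θ : ℝ => Complex.exp (θ * Complex.I)) :=
    Complex.continuous_exp.comp (Complex.continuous_ofReal.mul continuous_const)
  exact (hc.add continuous_const).div (hc.sub continuous_const) (fun θ => exp_sub_ne z hz θ)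

lemma integral_complex_eq (z : ℂ) (hz : ‖z‖ < 1) :
    (∫ θ in (0:ℝ)..(2 * Real.pi), (Complex.exp (θ * Complex.I) + z) / (Complex.exp (θ * Complex.I) - z))
      = (2 * Real.pi : ℝ) := by
  have hFTC := intervalIntegral.integral_eq_sub_of_hasDerivAt
    (f := fun t : ℝ => (t : ℂ) + (2 / Complex.I) * Complex.log (1 - z * Complex.exp (-(t:ℂ) * Complex.I)))
    (f' := fun θ : ℝ => (Complex.exp (θ * Complex.I) + z) / (Complex.exp (θ * Complex.I) - z))
    (a := 0) (b := 2 * Real.pi)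
    (fun θ _ => hasDerivAt_F z hz θ)
    ((continuous_integrand z hz).intervalIntegrable 0 (2 * Real.pi))
  rw [hFTC]
  beta_reduce
  have h2pi : Complex.exp (-(((2 * Real.pi : ℝ)):ℂ) * Complex.I) = 1 := by
    have : (-(((2 * Real.pi : ℝ)):ℂ) * Complex.I) = -(2 * Real.pi * Complex.I) := by push_cast; ring
    rw [this]
    simp [Complex.exp_neg, Complex.exp_two_pi_mul_I]
  rw [h2pi]
  simp [Complex.exp_zero]

lemma integral_pk (z : ℂ) (hz : ‖z‖ < 1) :
    (∫ θ in Set.Ioc (0:ℝ) (2 * Real.pi), pk z θ) = 2 * Real.pi := by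
  rw [← intervalIntegral.integral_of_le (by positivity : (0:ℝ) ≤ 2 * Real.pi)]
  have : (∫ θ in (0:ℝ)..(2 * Real.pi), pk z θ)
      = ∫ θ in (0:ℝ)..(2 * Real.pi),
          Complex.reCLM ((Complex.exp (θ * Complex.I) + z) / (Complex.exp (θ * Complex.I) - z)) := by
    apply intervalIntegral.integral_congr
    intro θ _
    exact pk_eq_re z hz θ
  rw [this, ContinuousLinearMap.intervalIntegral_comp_comm _
    ((continuous_integrand z hz).intervalIntegrable 0 (2 * Real.pi)), integral_complex_eq z hz]
  simp

lemma circleM_pk_one (z : ℂ) (hz : ‖z‖ < 1) :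
    (∫ θ, pk z θ ∂circleM) = 1 := by
  rw [circleM, integral_smul_measure]
  rw [ENNReal.toReal_inv, ENNReal.toReal_ofReal (by positivity)]
  rw [integral_pk z hz, smul_eq_mul, inv_mul_cancel₀ (by positivity)]

lemma pk_nonneg (z : ℂ) (hz : ‖z‖ < 1) (θ : ℝ) : 0 ≤ pk z θ := by
  apply div_nonneg
  · nlinarith [norm_nonneg z]
  · positivity

lemma mem_unitDisk {z : ℂ} (hz : z ∈ unitDisk) : ‖z‖ < 1 := by
  simpa [unitDisk] using hz

/-- Division property of BMOA: if F ∈ H², I is inner and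
IF ∈ BMOA (finite Garsia norm), then F ∈ BMOA and ‖F‖_G ≤ ‖IF‖_G. -/
theorem bmoa_division_property (Fa : ℂ → ℂ) (Fb : ℝ → ℂ) (Ia : ℂ → ℂ) (Ib : ℝ → ℂ)
    (hF2 : MemLp Fb 2 circleM)
    (hFanal : DifferentiableOn ℂ Fa unitDisk)
    (hFrec : ∀ z ∈ unitDisk, poissonInt Fb z = Fa z)
    (hIanal : DifferentiableOn ℂ Ia unitDisk)
    (hIbdd : ∃ C : ℝ, ∀ z ∈ unitDisk, ‖Ia z‖ ≤ C)
    (hIuni : ∀ᵐ θ ∂circleM, ‖Ib θ‖ = 1)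
    (hIrec : ∀ z ∈ unitDisk, poissonInt Ib z = Ia z)
    (hProdrec : ∀ z ∈ unitDisk,
      poissonInt (fun θ => Ib θ * Fb θ) z = Ia z * Fa z)
    (hIFbmo : garsiaNorm (fun θ => Ib θ * Fb θ) < ⊤) :
    garsiaNorm Fb < ⊤ ∧ garsiaNorm Fb ≤ garsiaNorm (fun θ => Ib θ * Fb θ) := by
  -- |Ia z| ≤ 1 on the disk
  have hIa : ∀ z ∈ unitDisk, ‖Ia z‖ ≤ 1 := by
    intro z hz
    have hzlt := mem_unitDisk hz
    rw [← hIrec z hz]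
    calc ‖poissonInt Ib z‖ = ‖∫ θ, (pk z θ : ℂ) * Ib θ ∂circleM‖ := rfl
      _ ≤ ∫ θ, ‖(pk z θ : ℂ) * Ib θ‖ ∂circleM := norm_integral_le_integral_norm _
      _ = ∫ θ, pk z θ ∂circleM := by
          apply integral_congr_ae
          filter_upwards [hIuni] with θ hθ
          simp [norm_mul, hθ, Complex.norm_real,
            Real.norm_of_nonneg (pk_nonneg z hzlt θ), pk_nonneg z hzlt θ]
      _ = 1 := circleM_pk_one z hzlt
  -- pointwise comparison of Phi
  have hPhi : ∀ z ∈ unitDisk, Phi Fb z ≤ Phi (fun θ => Ib θ * Fb θ) z := by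
    intro z hz
    unfold Phi
    have hint : (∫ θ, pk z θ * ‖(fun θ => Ib θ * Fb θ) θ‖ ^ 2 ∂circleM)
        = ∫ θ, pk z θ * ‖Fb θ‖ ^ 2 ∂circleM := by
      apply integral_congr_ae
      filter_upwards [hIuni] with θ hθ
      simp [norm_mul, hθ]
    rw [hint, hFrec z hz, hProdrec z hz]
    have h1 : ‖Ia z * Fa z‖ ^ 2 ≤ ‖Fa z‖ ^ 2 := by
      rw [norm_mul]
      have h := mul_le_of_le_one_left (norm_nonneg (Fa z)) (hIa z hz)
      exact pow_le_pow_left₀ (mul_nonneg (norm_nonneg _) (norm_nonneg _)) h 2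
    linarith
  have hle : garsiaNorm Fb ≤ garsiaNorm (fun θ => Ib θ * Fb θ) := by
    apply iSup_mono
    intro z
    exact ENNReal.ofReal_le_ofReal (Real.sqrt_le_sqrt (hPhi z z.2))
  exact ⟨lt_of_le_of_lt hle hIFbmo, hle⟩
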